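/- Let α ∈ (1,2) and let K ≥ 3 be an integer. Define σ_{α,K} = ( ((1−1/K)^{(1−α)/(3−α)} + (1+1/K)^{(1−α)/(3−α)})/2 )^{3−α}. Then 1 + ((α−1)/(3−α))·(1/K²) ≤ σ_{α,K} ≤ 1 + (7(α−1)/(6(3−α)))·(1/K²). -/

import Mathlib

/-!
Put `β = (1 - α) / (3 - α) ∈ [-1, 0]`, so that `3 - α = 2 / (1 - β)`, and `y = 1 / K ≤ 1 / 3`.
The mean `M(y) = ((1 - y) ^ β + (1 + y) ^ β) / 2` lies between `1 + c y²` and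
`1 + c y² + c (8 - 9β) y⁴ / 12`, where `c = β (β - 1) / 2`: both differences vanish to second
order at `y = 0`, and their second derivatives are controlled by
`(1 - y) ^ (β - 2) + (1 + y) ^ (β - 2)`, which is `≥ 2` by AM-GM and `≤ 2 + (8 - 9β) y²` by
convexity of `γ ↦ t ^ γ` between the exponents `-3` and `-2`. Raising to the power
`2 / (1 - β) ∈ [1, 2]`, Bernoulli's inequality in both directions turns `c y²` into `-β y²`,
while the quartic term costs at most a factor `1 + 17 / 108 < 7 / 6`.
-/

open Real Set

lemma nonneg_of_hasDerivAt_of_nonneg {F F' : ℝ → ℝ} {x : ℝ} (hx : 0 ≤ x)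
    (hF : ∀ t ∈ Icc 0 x, HasDerivAt F (F' t) t) (hF' : ∀ t ∈ Icc 0 x, 0 ≤ F' t)
    (h0 : F 0 = 0) : 0 ≤ F x := by
  have hmono : MonotoneOn F (Icc 0 x) := by
    refine monotoneOn_of_deriv_nonneg (convex_Icc 0 x)
      (fun t ht ↦ (hF t ht).continuousAt.continuousWithinAt) (fun t ht ↦ ?_) fun t ht ↦ ?_
    all_goals rw [interior_Icc] at ht
    · exact (hF t (Ioo_subset_Icc_self ht)).differentiableAt.differentiableWithinAt
    · rw [(hF t (Ioo_subset_Icc_self ht)).deriv]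
      exact hF' t (Ioo_subset_Icc_self ht)
  simpa [h0] using hmono (left_mem_Icc.2 hx) (right_mem_Icc.2 hx) hx

lemma nonneg_of_hasDerivAt_of_hasDerivAt_of_nonneg {F F' F'' : ℝ → ℝ} {x : ℝ} (hx : 0 ≤ x)
    (hF : ∀ t ∈ Icc 0 x, HasDerivAt F (F' t) t) (hF' : ∀ t ∈ Icc 0 x, HasDerivAt F' (F'' t) t)
    (hF'' : ∀ t ∈ Icc 0 x, 0 ≤ F'' t) (h0 : F 0 = 0) (h0' : F' 0 = 0) : 0 ≤ F x := by
  refine nonneg_of_hasDerivAt_of_nonneg hx hF (fun t ht ↦ ?_) h0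
  have hsub : Icc 0 t ⊆ Icc 0 x := Icc_subset_Icc_right ht.2
  exact nonneg_of_hasDerivAt_of_nonneg ht.1 (fun s hs ↦ hF' s (hsub hs))
    (fun s hs ↦ hF'' s (hsub hs)) h0'

lemma two_le_rpow_add_rpow_of_mul_le_one {a b γ : ℝ} (ha : 0 < a) (hb : 0 < b)
    (hab : a * b ≤ 1) (hγ : γ ≤ 0) : 2 ≤ a ^ γ + b ^ γ := by
  have hsq_a : a ^ γ = (a ^ (γ / 2)) ^ 2 := by
    rw [← rpow_natCast, ← rpow_mul ha.le]; norm_num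
  have hsq_b : b ^ γ = (b ^ (γ / 2)) ^ 2 := by
    rw [← rpow_natCast, ← rpow_mul hb.le]; norm_num
  have hprod : 1 ≤ a ^ (γ / 2) * b ^ (γ / 2) := by
    rw [← mul_rpow ha.le hb.le]
    exact one_le_rpow_of_pos_of_le_one_of_nonpos (mul_pos ha hb) hab (by linarith)
  rw [hsq_a, hsq_b]
  nlinarith [sq_nonneg (a ^ (γ / 2) - b ^ (γ / 2))]

lemma hasDerivAt_one_sub_rpow (γ : ℝ) {t : ℝ} (ht : t < 1) :
    HasDerivAt (fun s ↦ (1 - s) ^ γ) (-(γ * (1 - t) ^ (γ - 1))) t :=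
  ((hasDerivAt_id' t).const_sub 1).rpow_const (Or.inl (sub_pos.2 ht).ne') |>.congr_deriv (by ring)

lemma hasDerivAt_one_add_rpow (γ : ℝ) {t : ℝ} (ht : -1 < t) :
    HasDerivAt (fun s ↦ (1 + s) ^ γ) (γ * (1 + t) ^ (γ - 1)) t :=
  ((hasDerivAt_id' t).const_add 1).rpow_const (Or.inl (by linarith : (0 : ℝ) < 1 + t).ne')
    |>.congr_deriv (by ring)

lemma hasDerivAt_one_sub_rpow_add_one_add_rpow (γ : ℝ) {t : ℝ} (ht : t ∈ Ioo (-1) 1) :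
    HasDerivAt (fun s ↦ (1 - s) ^ γ + (1 + s) ^ γ)
      (γ * ((1 + t) ^ (γ - 1) - (1 - t) ^ (γ - 1))) t :=
  ((hasDerivAt_one_sub_rpow γ ht.2).add (hasDerivAt_one_add_rpow γ ht.1)).congr_deriv (by ring)

lemma hasDerivAt_one_add_rpow_sub_one_sub_rpow (γ : ℝ) {t : ℝ} (ht : t ∈ Ioo (-1) 1) :
    HasDerivAt (fun s ↦ (1 + s) ^ γ - (1 - s) ^ γ)
      (γ * ((1 + t) ^ (γ - 1) + (1 - t) ^ (γ - 1))) t :=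
  ((hasDerivAt_one_add_rpow γ ht.1).sub (hasDerivAt_one_sub_rpow γ ht.2)).congr_deriv (by ring)

lemma one_add_mul_sq_le_rpow_add_rpow_div_two {β y : ℝ} (hβ : β ≤ 0) (hy₀ : 0 ≤ y)
    (hy₁ : y < 1) :
    1 + β * (β - 1) / 2 * y ^ 2 ≤ ((1 - y) ^ β + (1 + y) ^ β) / 2 := by
  have hIoo : ∀ t ∈ Icc 0 y, t ∈ Ioo (-1) 1 := fun t ht ↦ ⟨by linarith [ht.1], by linarith [ht.2]⟩
  suffices 0 ≤ (1 - y) ^ β + (1 + y) ^ β - 2 - β * (β - 1) * y ^ 2 by linarith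
  refine nonneg_of_hasDerivAt_of_hasDerivAt_of_nonneg hy₀
    (F := fun t ↦ (1 - t) ^ β + (1 + t) ^ β - 2 - β * (β - 1) * t ^ 2)
    (F' := fun t ↦ β * ((1 + t) ^ (β - 1) - (1 - t) ^ (β - 1)) - 2 * β * (β - 1) * t)
    (F'' := fun t ↦ β * (β - 1) * ((1 - t) ^ (β - 2) + (1 + t) ^ (β - 2) - 2))
    (fun t ht ↦ ?_) (fun t ht ↦ ?_) (fun t ht ↦ ?_) (by norm_num) (by norm_num)
  · exact (((hasDerivAt_one_sub_rpow_add_one_add_rpow β (hIoo t ht)).sub_const 2).sub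
      ((hasDerivAt_pow 2 t).const_mul (β * (β - 1)))).congr_deriv (by push_cast; ring)
  · have h := ((hasDerivAt_one_add_rpow_sub_one_sub_rpow (β - 1) (hIoo t ht)).const_mul β).sub
      ((hasDerivAt_id' t).const_mul (2 * β * (β - 1)))
    rw [show β - 1 - 1 = β - 2 by ring] at h
    exact h.congr_deriv (by ring)
  · have hβ' : 0 ≤ β * (β - 1) := mul_nonneg_of_nonpos_of_nonpos hβ (by linarith)
    have h2 : 2 ≤ (1 - t) ^ (β - 2) + (1 + t) ^ (β - 2) :=
      two_le_rpow_add_rpow_of_mul_le_one (by linarith [(hIoo t ht).2])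
        (by linarith [(hIoo t ht).1]) (by nlinarith [sq_nonneg t]) (by linarith)
    exact mul_nonneg hβ' (by linarith)

lemma one_sub_rpow_neg_three_add_one_add_rpow_neg_three_le {y : ℝ} (hy₀ : 0 ≤ y)
    (hy₁ : y ≤ 1 / 3) :
    (1 - y) ^ (-3 : ℝ) + (1 + y) ^ (-3 : ℝ) ≤ 2 + 17 * y ^ 2 := by
  have h₁ : 0 < 1 - y := by linarith
  have h₂ : 0 < 1 + y := by linarith
  rw [show (-3 : ℝ) = -((3 : ℕ) : ℝ) by norm_num, rpow_neg h₁.le, rpow_neg h₂.le, rpow_natCast,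
    rpow_natCast, inv_add_inv (by positivity) (by positivity), div_le_iff₀ (by positivity)]
  have hu : y ^ 2 ≤ 1 / 9 := by nlinarith
  nlinarith [mul_nonneg (sq_nonneg y) (sub_nonneg.2 hu), pow_nonneg (sq_nonneg y) 3]

lemma one_sub_rpow_neg_two_add_one_add_rpow_neg_two_le {y : ℝ} (hy₀ : 0 ≤ y)
    (hy₁ : y ≤ 1 / 3) :
    (1 - y) ^ (-2 : ℝ) + (1 + y) ^ (-2 : ℝ) ≤ 2 + 8 * y ^ 2 := by
  have h₁ : 0 < 1 - y := by linarith
  have h₂ : 0 < 1 + y := by linarith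
  rw [show (-2 : ℝ) = -((2 : ℕ) : ℝ) by norm_num, rpow_neg h₁.le, rpow_neg h₂.le, rpow_natCast,
    rpow_natCast, inv_add_inv (by positivity) (by positivity), div_le_iff₀ (by positivity)]
  have hu : y ^ 2 ≤ 1 / 9 := by nlinarith
  nlinarith [mul_nonneg (sq_nonneg y) (sub_nonneg.2 hu), pow_nonneg (sq_nonneg y) 3]

lemma rpow_le_of_mem_Icc_neg_three_neg_two {t γ : ℝ} (ht : 0 < t) (hγ : γ ∈ Icc (-3) (-2)) :
    t ^ γ ≤ (-2 - γ) * t ^ (-3 : ℝ) + (3 + γ) * t ^ (-2 : ℝ) := by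
  have h := (convexOn_rpow_left ht).2 (mem_univ (-3)) (mem_univ (-2))
    (by linarith [hγ.2] : 0 ≤ -2 - γ) (by linarith [hγ.1] : 0 ≤ 3 + γ) (by ring)
  simp only [smul_eq_mul] at h
  rwa [show (-2 - γ) * -3 + (3 + γ) * -2 = γ by ring] at h

lemma one_sub_rpow_add_one_add_rpow_le {γ y : ℝ} (hγ : γ ∈ Icc (-3) (-2)) (hy₀ : 0 ≤ y)
    (hy₁ : y ≤ 1 / 3) : (1 - y) ^ γ + (1 + y) ^ γ ≤ 2 - (10 + 9 * γ) * y ^ 2 := by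
  have h₁ := rpow_le_of_mem_Icc_neg_three_neg_two (by linarith : 0 < 1 - y) hγ
  have h₂ := rpow_le_of_mem_Icc_neg_three_neg_two (by linarith : 0 < 1 + y) hγ
  have h₃ := one_sub_rpow_neg_three_add_one_add_rpow_neg_three_le hy₀ hy₁
  have h₄ := one_sub_rpow_neg_two_add_one_add_rpow_neg_two_le hy₀ hy₁
  nlinarith [hγ.1, hγ.2]

lemma rpow_add_rpow_div_two_le {β y : ℝ} (hβ : β ∈ Icc (-1) 0)
    (hy₀ : 0 ≤ y) (hy₁ : y ≤ 1 / 3) :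
    ((1 - y) ^ β + (1 + y) ^ β) / 2 ≤
      1 + β * (β - 1) / 2 * y ^ 2 + β * (β - 1) * (8 - 9 * β) / 24 * y ^ 4 := by
  have hIoo : ∀ t ∈ Icc 0 y, t ∈ Ioo (-1) 1 := fun t ht ↦ ⟨by linarith [ht.1], by linarith [ht.2]⟩
  suffices 0 ≤ 2 + β * (β - 1) * y ^ 2 + β * (β - 1) * (8 - 9 * β) / 12 * y ^ 4
      - ((1 - y) ^ β + (1 + y) ^ β) by linarith
  refine nonneg_of_hasDerivAt_of_hasDerivAt_of_nonneg hy₀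
    (F := fun t ↦ 2 + β * (β - 1) * t ^ 2 + β * (β - 1) * (8 - 9 * β) / 12 * t ^ 4
      - ((1 - t) ^ β + (1 + t) ^ β))
    (F' := fun t ↦ 2 * β * (β - 1) * t + β * (β - 1) * (8 - 9 * β) / 3 * t ^ 3
      - β * ((1 + t) ^ (β - 1) - (1 - t) ^ (β - 1)))
    (F'' := fun t ↦
      β * (β - 1) * (2 + (8 - 9 * β) * t ^ 2 - ((1 - t) ^ (β - 2) + (1 + t) ^ (β - 2))))
    (fun t ht ↦ ?_) (fun t ht ↦ ?_) (fun t ht ↦ ?_) (by norm_num) (by norm_num)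
  · exact ((((hasDerivAt_pow 2 t).const_mul (β * (β - 1))).const_add 2).add
      ((hasDerivAt_pow 4 t).const_mul (β * (β - 1) * (8 - 9 * β) / 12))).sub
      (hasDerivAt_one_sub_rpow_add_one_add_rpow β (hIoo t ht)) |>.congr_deriv (by push_cast; ring)
  · have h := ((((hasDerivAt_id' t).const_mul (2 * β * (β - 1))).add
      ((hasDerivAt_pow 3 t).const_mul (β * (β - 1) * (8 - 9 * β) / 3))).sub
      ((hasDerivAt_one_add_rpow_sub_one_sub_rpow (β - 1) (hIoo t ht)).const_mul β))
    rw [show β - 1 - 1 = β - 2 by ring] at h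
    exact h.congr_deriv (by push_cast; ring)
  · have hβ' : 0 ≤ β * (β - 1) := mul_nonneg_of_nonpos_of_nonpos hβ.2 (by linarith [hβ.2])
    have h := one_sub_rpow_add_one_add_rpow_le (γ := β - 2)
      ⟨by linarith [hβ.1], by linarith [hβ.2]⟩ ht.1 (by linarith [ht.2])
    exact mul_nonneg hβ' (by linarith)

lemma one_add_rpow_le_one_add_mul_add_mul_sq {E q : ℝ} (hE : -1 ≤ E) (hq₁ : 1 ≤ q) (hq₂ : q ≤ 2) :
    (1 + E) ^ q ≤ 1 + q * E + (q - 1) * E ^ 2 := by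
  have hpos : 0 ≤ 1 + E := by linarith
  calc (1 + E) ^ q = (1 + E) * (1 + E) ^ (q - 1) := by
        rw [← rpow_one_add' hpos (by linarith), add_sub_cancel]
    _ ≤ (1 + E) * (1 + (q - 1) * E) := mul_le_mul_of_nonneg_left
        (rpow_one_add_le_one_add_mul_self hE (by linarith) (by linarith)) hpos
    _ = 1 + q * E + (q - 1) * E ^ 2 := by ring

lemma two_mul_add_mul_sq_le {β y : ℝ} (hβ : β ∈ Icc (-1) 0) (hy₀ : 0 ≤ y) (hy₁ : y ≤ 1 / 3) :
    2 * (β * (β - 1) / 2 * y ^ 2 + β * (β - 1) * (8 - 9 * β) / 24 * y ^ 4)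
      + (1 + β) * (β * (β - 1) / 2 * y ^ 2 + β * (β - 1) * (8 - 9 * β) / 24 * y ^ 4) ^ 2
      ≤ -7 * β * (1 - β) / 6 * y ^ 2 := by
  obtain ⟨hβ₁, hβ₂⟩ := hβ
  set E := β * (β - 1) / 2 * y ^ 2 + β * (β - 1) * (8 - 9 * β) / 24 * y ^ 4 with hE_def
  have hc : 0 ≤ β * (β - 1) := mul_nonneg_of_nonpos_of_nonpos hβ₂ (by linarith)
  have hu : y ^ 2 ≤ 1 / 9 := by nlinarith
  have hE : E ≤ β * (β - 1) * (116 - 9 * β) / 216 * y ^ 2 := by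
    have h4 : y ^ 4 ≤ y ^ 2 / 9 := by nlinarith [sq_nonneg y]
    nlinarith [mul_le_mul_of_nonneg_left h4 (by nlinarith : 0 ≤ β * (β - 1) * (8 - 9 * β))]
  have hE0 : 0 ≤ E := add_nonneg (mul_nonneg (by linarith) (sq_nonneg y))
    (mul_nonneg (div_nonneg (mul_nonneg hc (by linarith)) (by norm_num)) (by positivity))
  clear_value E
  have hE1 : E ≤ 1 / 7 := by
    have h1 : β * (β - 1) * (116 - 9 * β) ≤ 250 := by
      nlinarith [mul_nonneg_of_nonpos_of_nonpos hβ₂ hβ₂]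
    nlinarith [mul_le_mul_of_nonneg_left hu (by nlinarith : 0 ≤ β * (β - 1) * (116 - 9 * β))]
  -- `(1 + β) E² ≤ (1 + β) E / 7`, so the left side is at most `(15 + β) / 7 · E`.
  have h2 : (116 - 9 * β) * (15 + β) ≤ 1764 := by nlinarith
  nlinarith [mul_le_mul_of_nonneg_left hE1 (mul_nonneg (by linarith : 0 ≤ 1 + β) hE0),
    mul_le_mul_of_nonneg_left hE (by linarith : 0 ≤ 15 + β),
    mul_le_mul_of_nonneg_left h2 (mul_nonneg hc (sq_nonneg y))]

lemma one_sub_mul_sq_le_rpow_add_rpow_div_two_rpow {β y : ℝ} (hβ : β ∈ Icc (-1) 0)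
    (hy₀ : 0 ≤ y) (hy₁ : y < 1) :
    1 - β * y ^ 2 ≤ (((1 - y) ^ β + (1 + y) ^ β) / 2) ^ (2 / (1 - β)) := by
  obtain ⟨hβ₁, hβ₂⟩ := hβ
  have hq : 1 ≤ 2 / (1 - β) := by rw [le_div_iff₀ (by linarith)]; linarith
  have hc : 0 ≤ β * (β - 1) / 2 * y ^ 2 := by
    have : 0 ≤ β * (β - 1) := mul_nonneg_of_nonpos_of_nonpos hβ₂ (by linarith)
    positivity
  calc 1 - β * y ^ 2 = 1 + 2 / (1 - β) * (β * (β - 1) / 2 * y ^ 2) := by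
        field_simp [(by linarith : 1 - β ≠ 0)]; ring
    _ ≤ (1 + β * (β - 1) / 2 * y ^ 2) ^ (2 / (1 - β)) :=
        one_add_mul_self_le_rpow_one_add (by linarith) hq
    _ ≤ (((1 - y) ^ β + (1 + y) ^ β) / 2) ^ (2 / (1 - β)) :=
        rpow_le_rpow (by linarith) (one_add_mul_sq_le_rpow_add_rpow_div_two hβ₂ hy₀ hy₁)
          (by linarith)

lemma rpow_add_rpow_div_two_rpow_le {β y : ℝ} (hβ : β ∈ Icc (-1) 0) (hy₀ : 0 ≤ y)
    (hy₁ : y ≤ 1 / 3) :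
    (((1 - y) ^ β + (1 + y) ^ β) / 2) ^ (2 / (1 - β)) ≤ 1 - 7 * β / 6 * y ^ 2 := by
  obtain ⟨hβ₁, hβ₂⟩ := hβ
  have hβ₃ : 0 < 1 - β := by linarith
  have hq₁ : 1 ≤ 2 / (1 - β) := by rw [le_div_iff₀ hβ₃]; linarith
  have hq₂ : 2 / (1 - β) ≤ 2 := by rw [div_le_iff₀ hβ₃]; linarith
  set E := β * (β - 1) / 2 * y ^ 2 + β * (β - 1) * (8 - 9 * β) / 24 * y ^ 4 with hE_def
  have hM : 0 ≤ ((1 - y) ^ β + (1 + y) ^ β) / 2 := by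
    have := rpow_nonneg (by linarith : (0 : ℝ) ≤ 1 - y) β
    have := rpow_nonneg (by linarith : (0 : ℝ) ≤ 1 + y) β
    positivity
  have hME : ((1 - y) ^ β + (1 + y) ^ β) / 2 ≤ 1 + E := by
    have := rpow_add_rpow_div_two_le ⟨hβ₁, hβ₂⟩ hy₀ hy₁
    linarith
  calc (((1 - y) ^ β + (1 + y) ^ β) / 2) ^ (2 / (1 - β)) ≤ (1 + E) ^ (2 / (1 - β)) :=
        rpow_le_rpow hM hME (by positivity)
    _ ≤ 1 + 2 / (1 - β) * E + (2 / (1 - β) - 1) * E ^ 2 :=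
        one_add_rpow_le_one_add_mul_add_mul_sq (by linarith) hq₁ hq₂
    _ = 1 + (2 * E + (1 + β) * E ^ 2) / (1 - β) := by field_simp; ring
    _ ≤ 1 - 7 * β / 6 * y ^ 2 := by
        have h : 2 * E + (1 + β) * E ^ 2 ≤ -7 * β * (1 - β) / 6 * y ^ 2 :=
          two_mul_add_mul_sq_le ⟨hβ₁, hβ₂⟩ hy₀ hy₁
        have : (2 * E + (1 + β) * E ^ 2) / (1 - β) ≤ -7 * β / 6 * y ^ 2 := by
          rw [div_le_iff₀ hβ₃]; linarith
        linarith

theorem sigma_alpha_K_bounds (K : ℕ) (hK : 3 ≤ K) (α : ℝ) (hα1 : 1 < α) (hα2 : α < 2) :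
    1 + (α - 1) / (3 - α) * (1 / (K : ℝ) ^ 2) ≤
      (((1 - 1 / (K : ℝ)) ^ ((1 - α) / (3 - α))
          + (1 + 1 / (K : ℝ)) ^ ((1 - α) / (3 - α))) / 2) ^ (3 - α) ∧
    (((1 - 1 / (K : ℝ)) ^ ((1 - α) / (3 - α))
        + (1 + 1 / (K : ℝ)) ^ ((1 - α) / (3 - α))) / 2) ^ (3 - α) ≤
      1 + 7 * (α - 1) / (6 * (3 - α)) * (1 / (K : ℝ) ^ 2) := by
  have hα3 : 0 < 3 - α := by linarith
  have hK3 : (3 : ℝ) ≤ K := by exact_mod_cast hK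
  have hy₀ : 0 ≤ 1 / (K : ℝ) := by positivity
  have hy₁ : 1 / (K : ℝ) ≤ 1 / 3 := one_div_le_one_div_of_le (by norm_num) hK3
  set β := (1 - α) / (3 - α) with hβ_def
  have hβ : β ∈ Icc (-1) 0 :=
    ⟨by rw [le_div_iff₀ hα3]; linarith, div_nonpos_of_nonpos_of_nonneg (by linarith) hα3.le⟩
  have hq : 2 / (1 - β) = 3 - α := by rw [hβ_def]; field_simp; ring
  have hlow := one_sub_mul_sq_le_rpow_add_rpow_div_two_rpow hβ hy₀ (by linarith)
  have hupp := rpow_add_rpow_div_two_rpow_le hβ hy₀ hy₁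
  rw [hq] at hlow hupp
  have hy2 : (1 / (K : ℝ)) ^ 2 = 1 / (K : ℝ) ^ 2 := by rw [div_pow, one_pow]
  have hlin : (α - 1) / (3 - α) = -β := by rw [hβ_def]; ring
  have hlin' : 7 * (α - 1) / (6 * (3 - α)) = -7 * β / 6 := by rw [hβ_def]; field_simp; ring
  rw [hy2] at hlow hupp
  rw [hlin, hlin']
  constructor <;> linarith
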